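/- arXiv:1805.10070 — 3 statements merged into one kernel-verified Lean document; each statement's English description precedes it below -/
import Mathlib

section
/- Let P be an ordered set of strings and let u = [i,j] ∈ Decomp_BWT(P). Then the cardinality j − i + 1 of u equals the number of strings s ∈ P.S such that reverse(Dec_Pre[u]) is a suffix of s. -/
namespace BwtXbw

variable {α β : Type*}

/-- An ordered set of strings: a nonempty list of distinct nonempty strings over `α`
(the list order is the enumeration `t_1, …, t_n`). -/
structure OSS (α : Type*) where
  strs : List (List α)
  strs_ne : strs ≠ []
  nodup : strs.Nodup
  mem_ne : ∀ s ∈ strs, s ≠ []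

/-- Embed a symbol of `α` into `WithBot α`; `⊥` plays the role of the separator `$`,
which is smaller than every symbol of the alphabet. -/
def sym (a : α) : WithBot α := (a : WithBot α)

/-- The multi-string `m_P = t_1 $ t_2 $ ⋯ $ t_n $` over `WithBot α`. -/
def mP (P : OSS α) : List (WithBot α) :=
  (P.strs.map (fun s => s.map sym ++ [⊥])).flatten

/-- `SA` is a (0-based) suffix array for `m`: a bijection of `[0, |m|)` onto itself
listing the suffixes of `m` in increasing lexicographic order. -/
def IsSuffixArray [LinearOrder α] (m : List (WithBot α)) (SA : ℕ → ℕ) : Prop :=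
  Set.BijOn SA (Set.Iio m.length) (Set.Iio m.length) ∧
  ∀ i j : ℕ, i < j → j < m.length →
    List.Lex (· < ·) (m.drop (SA i)) (m.drop (SA j))

/-- `LRS(P)[i]` (0-based): number of symbols of `m` from position `SA i` up to (but not
including) the first separator at or after position `SA i`. -/
def lrs [LinearOrder α] (m : List (WithBot α)) (SA : ℕ → ℕ) (i : ℕ) : ℕ :=
  ((m.drop (SA i)).takeWhile (fun c => decide (c ≠ ⊥))).length

/-- Length of the longest common prefix of two lists. -/
def lcpLen [DecidableEq β] : List β → List β → ℕ
  | a :: s, b :: t => if a = b then lcpLen s t + 1 else 0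
  | _, _ => 0

/-- `LCP(P)[i] = min(LCP(m_P)[i], LRS(P)[i])` (0-based; `0` at `i = 0`). -/
def lcpP [LinearOrder α] (m : List (WithBot α)) (SA : ℕ → ℕ) (i : ℕ) : ℕ :=
  if i = 0 then 0
  else min (lcpLen (m.drop (SA (i - 1))) (m.drop (SA i))) (lrs m SA i)

/-- `Decomp_BWT(P)`: the maximal integer intervals `[u.1, u.2] ⊆ [0, |m|)` such that
`LCP(P)[k] = LRS(P)[k]` for every interior position `k ∈ [u.1+1, u.2]`. -/
def DecompBWT [LinearOrder α] (m : List (WithBot α)) (SA : ℕ → ℕ) : Set (ℕ × ℕ) :=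
  { u | u.1 ≤ u.2 ∧ u.2 < m.length ∧
        (∀ k, u.1 < k → k ≤ u.2 → lcpP m SA k = lrs m SA k) ∧
        (u.1 = 0 ∨ lcpP m SA u.1 ≠ lrs m SA u.1) ∧
        (u.2 + 1 = m.length ∨ lcpP m SA (u.2 + 1) ≠ lrs m SA (u.2 + 1)) }

/-- `Dec_Pre[u]`: the reverse of `m[SA u.1 .. SA u.1 + LRS[u.1] − 1]`. -/
def decPre [LinearOrder α] (m : List (WithBot α)) (SA : ℕ → ℕ) (u : ℕ × ℕ) :
    List (WithBot α) :=
  ((m.drop (SA u.1)).take (lrs m SA u.1)).reverse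

/-- `Prefix(←P.S)`: all prefixes (including the empty string) of the reversed strings of
`P.S`, viewed inside `WithBot α`. -/
def revPrefixes (P : OSS α) : Set (List (WithBot α)) :=
  { p | ∃ s ∈ P.strs, p <+: s.reverse.map sym }

/-- `Prefix(P.S)`: all prefixes (including the empty string) of the strings of `P.S`,
viewed inside `WithBot α`. -/
def fwdPrefixes (P : OSS α) : Set (List (WithBot α)) :=
  { p | ∃ s ∈ P.strs, p <+: s.map sym }

/-- `BWT(P)[i]` (0-based): `m[SA i − 1]` if `SA i > 0`, and the last symbol `$ = ⊥`
of `m` otherwise. -/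
def bwtArr (m : List (WithBot α)) (SA : ℕ → ℕ) (i : ℕ) : WithBot α :=
  if SA i = 0 then ⊥ else m.getD (SA i - 1) ⊥

/-- `C[c]`: the number of positions of `m` holding a symbol strictly smaller than `c`. -/
def Cfun [LinearOrder α] (m : List (WithBot α)) (c : WithBot α) : ℕ :=
  (m.filter (fun b => decide (b < c))).length

/-- The Last-to-First mapping (0-based):
`LF[i] = C[BWT[i]] + #{k < i : BWT[k] = BWT[i]}`. -/
def LF [LinearOrder α] (m : List (WithBot α)) (SA : ℕ → ℕ) (i : ℕ) : ℕ :=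
  Cfun m (bwtArr m SA i) +
    ((List.range i).filter (fun k => decide (bwtArr m SA k = bwtArr m SA i))).length

/-- The arc set `A_T(P)` on `Decomp_BWT(P)`. -/
def AT [LinearOrder α] (m : List (WithBot α)) (SA : ℕ → ℕ) :
    Set ((ℕ × ℕ) × (ℕ × ℕ)) :=
  { uv | uv.1 ∈ DecompBWT m SA ∧ uv.2 ∈ DecompBWT m SA ∧
      ∃ x, uv.1.1 ≤ x ∧ x ≤ uv.1.2 ∧ bwtArr m SA x ≠ ⊥ ∧
        uv.2.1 ≤ LF m SA x ∧ LF m SA x ≤ uv.2.2 }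

/-- Arc relation of the Aho–Corasick tree on the vertex set `Pref`:
`p` is the longest proper prefix of `q` belonging to `Pref`. -/
def ACTedge (Pref : Set (List β)) (p q : List β) : Prop :=
  p ∈ Pref ∧ q ∈ Pref ∧ p ≠ q ∧ p <+: q ∧
    ∀ r ∈ Pref, r ≠ q → r <+: q → r.length ≤ p.length

/-- `k` is a failure candidate for the position `i`: `k < i` and
`LRS[k] ≤ LCP[l]` for all `l ∈ [k+1, i]`. -/
def FailCand [LinearOrder α] (m : List (WithBot α)) (SA : ℕ → ℕ) (i k : ℕ) : Prop :=
  k < i ∧ ∀ l, k < l → l ≤ i → lrs m SA k ≤ lcpP m SA l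

/-- The arc set `A_F(P)` on `Decomp_BWT(P)`: the largest failure candidate for `u.1`
exists and lies in `v`. -/
def AF [LinearOrder α] (m : List (WithBot α)) (SA : ℕ → ℕ) :
    Set ((ℕ × ℕ) × (ℕ × ℕ)) :=
  { uv | uv.1 ∈ DecompBWT m SA ∧ uv.2 ∈ DecompBWT m SA ∧
      ∃ k, FailCand m SA uv.1.1 k ∧ (∀ k', FailCand m SA uv.1.1 k' → k' ≤ k) ∧
        uv.2.1 ≤ k ∧ k ≤ uv.2.2 }

/-- Arc relation of the Aho–Corasick failure-link graph on the vertex set `Pref`: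
`q` is the longest proper suffix of `p` belonging to `Pref`. -/
def ACFLedge (Pref : Set (List β)) (p q : List β) : Prop :=
  p ∈ Pref ∧ q ∈ Pref ∧ p ≠ q ∧ q <:+ p ∧
    ∀ r ∈ Pref, r ≠ p → r <:+ p → r.length ≤ q.length

/-- The Run-Length measure `d_B(P) = #{i : BWT[i] ≠ BWT[i+1]}` (0-based, `i` ranging
over the first `|m| − 1` positions). -/
def dB [LinearOrder α] (m : List (WithBot α)) (SA : ℕ → ℕ) : ℕ :=
  ((List.range (m.length - 1)).filter
      (fun i => decide (bwtArr m SA i ≠ bwtArr m SA (i + 1)))).length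

/-- `P` is topologically planar: for every prefix `p` of the reverse of some string of
`P.S`, the indices `r` with `p` a prefix of `reverse(t_r)` form a set of consecutive
integers. -/
def TopPlanar [DecidableEq α] (P : OSS α) : Prop :=
  ∀ p : List α, (∃ s ∈ P.strs, p <+: s.reverse) →
    ∀ r₁ r₂ r₃ : ℕ, r₁ ≤ r₂ → r₂ ≤ r₃ → r₃ < P.strs.length →
      p <+: (P.strs.getD r₁ []).reverse → p <+: (P.strs.getD r₃ []).reverse →
      p <+: (P.strs.getD r₂ []).reverse

/-- `Letter[i]`: the first symbol of the suffix of rank `i`, i.e. `m[SA i]`. -/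
def letterArr (m : List (WithBot α)) (SA : ℕ → ℕ) (i : ℕ) : WithBot α :=
  m.getD (SA i) ⊥

/-- 0-based select: the position of the `(j+1)`-st occurrence of `c` in
`f 0, f 1, …, f (N−1)`. -/
def select0 [LinearOrder α] (f : ℕ → WithBot α) (N : ℕ) (c : WithBot α) (j : ℕ) : ℕ :=
  (((List.range N).filter (fun k => decide (f k = c)))).getD j 0

/-- The inverse Last-to-First mapping (0-based):
`RLF[i] = select_{Letter[i]}(BWT, i − C[Letter[i]])`. -/
def RLF [LinearOrder α] (m : List (WithBot α)) (SA : ℕ → ℕ) (i : ℕ) : ℕ :=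
  select0 (bwtArr m SA) m.length (letterArr m SA i)
    (i - Cfun m (letterArr m SA i))

/-- `d_A(T') = #{i : T'[i] ≠ T'[i+1]}`, the number of adjacent mismatches. -/
def dA [DecidableEq β] : List β → ℕ
  | a :: b :: t => (if a = b then 0 else 1) + dA (b :: t)
  | _ => 0

/-- `T'` is valid for the block decomposition `B` (an interval partition given by the
lengths of the blocks): `T'` splits into blocks of the same lengths as those of `B`,
with the same symbol set blockwise. -/
def ValidArr [DecidableEq β] (B : List (List β)) (T' : List β) : Prop :=
  ∃ B' : List (List β),
    List.Forall₂ (fun b b' => b.length = b'.length ∧ b.toFinset = b'.toFinset) B B' ∧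
    B'.flatten = T'

/-- `T'` is optimal for the block decomposition `B`: valid and of minimal `d_A`. -/
def OptimalArr [DecidableEq β] (B : List (List β)) (T' : List β) : Prop :=
  ValidArr B T' ∧ ∀ T'' : List β, ValidArr B T'' → dA T' ≤ dA T''


/-!
Write `w` for the `$`-free string with which the suffix of rank `u.1` begins. Two adjacent
ranks satisfy `LCP(P) = LRS(P)` exactly when their suffixes begin with the same
`$`-terminated string, and the suffixes beginning with `w$` occupy consecutive ranks, so the
block `u` consists precisely of the ranks of the suffixes beginning with `w$`. Through `SA`
these are the occurrences of `w$` in `m_P`, and a string of `P.S` contributes one such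
occurrence if it ends with `w` and none otherwise.
-/

lemma card_filter_comp_of_bijOn {γ : Type*} {s : Finset γ} {f : γ → γ} (hf : Set.BijOn f s s)
    (Q : γ → Prop) [DecidablePred Q] :
    (s.filter (fun x => Q (f x))).card = (s.filter Q).card := by
  refine Finset.card_nbij f (fun x hx => ?_)
    (hf.injOn.mono (Finset.coe_subset.mpr (Finset.filter_subset _ _))) (fun y hy => ?_)
  · rw [Finset.mem_coe, Finset.mem_filter] at hx ⊢
    exact ⟨hf.mapsTo hx.1, hx.2⟩
  · rw [Finset.mem_coe, Finset.mem_filter] at hy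
    obtain ⟨x, hx, rfl⟩ := hf.surjOn hy.1
    exact ⟨x, Finset.mem_filter.mpr ⟨hx, hy.2⟩, rfl⟩

lemma lcpLen_take_eq [DecidableEq β] :
    ∀ x y : List β, x.take (lcpLen x y) = y.take (lcpLen x y)
  | [], _ | _ :: _, [] => by simp [lcpLen]
  | a :: s, b :: t => by
    by_cases h : a = b
    · subst h
      simp [lcpLen, lcpLen_take_eq s t]
    · simp [lcpLen, h]

lemma prefix_of_length_le_lcpLen [DecidableEq β] {q x y : List β} (hq : q <+: y)
    (h : q.length ≤ lcpLen x y) : q <+: x := by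
  rw [List.prefix_iff_eq_take] at hq ⊢
  calc q = (y.take (lcpLen x y)).take q.length := by
        rwa [List.take_take, Nat.min_eq_left h]
    _ = x.take q.length := by rw [← lcpLen_take_eq, List.take_take, Nat.min_eq_left h]

lemma length_le_lcpLen_append [DecidableEq β] :
    ∀ q x y : List β, q.length ≤ lcpLen (q ++ x) (q ++ y)
  | [], _, _ => Nat.zero_le _
  | a :: q, x, y => by simpa [lcpLen] using length_le_lcpLen_append q x y

lemma append_lt_append_left_iff [LT β] [Std.Irrefl (· < · : β → β → Prop)] {x y : List β} :
    ∀ q : List β, q ++ x < q ++ y ↔ x < y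
  | [] => Iff.rfl
  | a :: q => by simpa using append_lt_append_left_iff q

lemma prefix_of_lt_of_lt [Preorder β] :
    ∀ {q x y z : List β}, q <+: x → q <+: z → x < y → y < z → q <+: y
  | [], _, _, _, _, _, _, _ => List.nil_prefix
  | a :: q, _, y, _, ⟨x', hx⟩, ⟨z', hz⟩, hxy, hyz => by
    subst hx hz
    cases y with
    | nil => exact absurd hxy (List.not_lt_nil _)
    | cons b y =>
      rcases List.cons_lt_cons_iff.mp hxy with hab | ⟨rfl, hxy'⟩
      · rcases List.cons_lt_cons_iff.mp hyz with hba | ⟨rfl, -⟩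
        · exact absurd hba (lt_asymm hab)
        · exact absurd hab (lt_irrefl _)
      · rcases List.cons_lt_cons_iff.mp hyz with hba | ⟨-, hyz'⟩
        · exact absurd hba (lt_irrefl _)
        · exact List.cons_prefix_cons.mpr ⟨rfl, prefix_of_lt_of_lt ⟨x', rfl⟩ ⟨z', rfl⟩ hxy' hyz'⟩

lemma prefix_of_prefix_append_bot :
    ∀ {q s y : List (WithBot α)}, ⊥ ∉ q → q <+: s ++ ⊥ :: y → q <+: s
  | [], _, _, _, _ => List.nil_prefix
  | a :: q, [], _, hq, h => absurd (List.cons_prefix_cons.mp h).1 (by simp_all)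
  | a :: q, b :: s, _, hq, h => by
    obtain ⟨rfl, hqs⟩ := List.cons_prefix_cons.mp h
    exact List.cons_prefix_cons.mpr ⟨rfl, prefix_of_prefix_append_bot (by simp_all) hqs⟩

lemma append_bot_prefix_append_bot_iff :
    ∀ {q s : List (WithBot α)} (y : List (WithBot α)), ⊥ ∉ q → ⊥ ∉ s →
      (q ++ [⊥] <+: s ++ ⊥ :: y ↔ q = s)
  | [], [], _, _, _ => by simp
  | [], b :: s, _, _, hs => by simp_all [eq_comm]
  | a :: q, [], _, hq, _ => by simp_all [eq_comm (a := a)]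
  | a :: q, b :: s, y, hq, hs => by
    simp [append_bot_prefix_append_bot_iff y (q := q) (s := s) (by simp_all) (by simp_all)]

lemma exists_eq_takeWhile_append_bot [DecidableEq α] :
    ∀ {l : List (WithBot α)}, ⊥ ∈ l →
      ∃ r, l = l.takeWhile (fun c => decide (c ≠ ⊥)) ++ ⊥ :: r
  | [], h => absurd h List.not_mem_nil
  | a :: l, h => by
    by_cases ha : a = ⊥
    · exact ⟨l, by simp [ha]⟩
    · obtain ⟨r, hr⟩ := exists_eq_takeWhile_append_bot (List.mem_of_ne_of_mem (Ne.symm ha) h)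
      exact ⟨r, by rw [List.takeWhile_cons_of_pos (by simpa), List.cons_append, ← hr]⟩

lemma length_le_lcpLen_append_bot_iff [Preorder α] [DecidableEq α] {a b r r' : List (WithBot α)}
    (ha : ⊥ ∉ a) (hb : ⊥ ∉ b) (hlt : a ++ ⊥ :: r < b ++ ⊥ :: r') :
    b.length ≤ lcpLen (a ++ ⊥ :: r) (b ++ ⊥ :: r') ↔ b = a := by
  refine ⟨fun h => ?_, fun hba => hba ▸ length_le_lcpLen_append b _ _⟩
  obtain ⟨t, rfl⟩ := prefix_of_prefix_append_bot hb
    (prefix_of_length_le_lcpLen (List.prefix_append _ _) h)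
  cases t with
  | nil => exact (List.append_nil b).symm
  | cons c t =>
    have hc : c ≠ ⊥ := fun hc => ha (by simp [hc])
    rw [List.append_assoc, List.cons_append, append_lt_append_left_iff] at hlt
    rcases List.cons_lt_cons_iff.mp hlt with hlt | ⟨hc', -⟩
    · exact absurd hlt (WithBot.not_lt_bot c)
    · exact absurd hc' hc

section Occurrences

variable [DecidableEq β]

def occurrenceCount (q m : List β) : ℕ :=
  ((Finset.range m.length).filter (fun p => q <+: m.drop p)).card

lemma occurrenceCount_cons (q : List β) (a : β) (l : List β) :
    occurrenceCount q (a :: l) = occurrenceCount q l + if q <+: a :: l then 1 else 0 := by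
  simp only [occurrenceCount, Finset.card_filter, List.length_cons, Finset.sum_range_succ',
    List.drop_succ_cons, List.drop_zero]

end Occurrences

lemma occurrenceCount_append_bot [DecidableEq α] {w : List (WithBot α)} (hw : ⊥ ∉ w)
    (M : List (WithBot α)) :
    ∀ {s : List (WithBot α)}, ⊥ ∉ s →
      occurrenceCount (w ++ [⊥]) (s ++ ⊥ :: M) =
        occurrenceCount (w ++ [⊥]) M + if w <:+ s then 1 else 0
  | [], _ => by
    rw [List.nil_append, occurrenceCount_cons, ← List.nil_append (⊥ :: M)]
    simp only [append_bot_prefix_append_bot_iff M hw List.not_mem_nil, List.suffix_nil]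
  | a :: s, hs => by
    have hs' : ⊥ ∉ s := fun h => hs (List.mem_cons_of_mem a h)
    have hself : ¬ a :: s <:+ s := fun h => by simpa using h.length_le
    rw [List.cons_append, occurrenceCount_cons, ← List.cons_append,
      occurrenceCount_append_bot hw M hs']
    simp only [append_bot_prefix_append_bot_iff M hw hs, List.suffix_cons_iff]
    by_cases hws : w = a :: s
    · simp [hws, hself]
    · simp [hws]

lemma occurrenceCount_flatten [DecidableEq α] {w : List (WithBot α)} (hw : ⊥ ∉ w) :
    ∀ ls : List (List α),
      occurrenceCount (w ++ [⊥]) (ls.map (fun s => s.map sym ++ [⊥])).flatten =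
        (ls.filter (fun s => decide (w <:+ s.map sym))).length
  | [] => rfl
  | t :: ls => by
    have ht : ⊥ ∉ t.map sym := by simp [sym]
    rw [List.map_cons, List.flatten_cons, List.append_assoc, List.singleton_append,
      occurrenceCount_append_bot hw _ ht, occurrenceCount_flatten hw ls, List.filter_cons]
    split <;> simp_all

section StringAt

variable [DecidableEq α]

def strAt (m : List (WithBot α)) (p : ℕ) : List (WithBot α) :=
  (m.drop p).takeWhile (fun c => decide (c ≠ ⊥))

lemma bot_not_mem_strAt (m : List (WithBot α)) (p : ℕ) : ⊥ ∉ strAt m p :=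
  fun h => by simpa using List.mem_takeWhile_imp h

lemma exists_drop_eq_strAt_append_bot {m : List (WithBot α)} (hm : [⊥] <:+ m) {p : ℕ}
    (hp : p < m.length) : ∃ r, m.drop p = strAt m p ++ ⊥ :: r := by
  apply exists_eq_takeWhile_append_bot
  obtain ⟨l, rfl⟩ := hm
  rw [List.length_append, List.length_singleton] at hp
  rw [List.drop_append_of_le_length (by omega)]
  exact List.mem_append_right _ (List.mem_singleton_self _)

lemma append_bot_prefix_drop_iff {m : List (WithBot α)} (hm : [⊥] <:+ m) {p : ℕ}
    (hp : p < m.length) {w : List (WithBot α)} (hw : ⊥ ∉ w) :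
    w ++ [⊥] <+: m.drop p ↔ strAt m p = w := by
  obtain ⟨r, hr⟩ := exists_drop_eq_strAt_append_bot hm hp
  rw [hr, append_bot_prefix_append_bot_iff r hw (bot_not_mem_strAt m p), eq_comm]

end StringAt

section SuffixArray

variable [LinearOrder α] {m : List (WithBot α)} {SA : ℕ → ℕ}

lemma lcpP_succ_eq_lrs_iff (hm : [⊥] <:+ m) (hSA : IsSuffixArray m SA) {k : ℕ}
    (hk : k + 1 < m.length) :
    lcpP m SA (k + 1) = lrs m SA (k + 1) ↔ strAt m (SA (k + 1)) = strAt m (SA k) := by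
  obtain ⟨r, hr⟩ := exists_drop_eq_strAt_append_bot hm (hSA.1.mapsTo (by omega : k < m.length))
  obtain ⟨r', hr'⟩ := exists_drop_eq_strAt_append_bot hm (hSA.1.mapsTo hk)
  have hlt : m.drop (SA k) < m.drop (SA (k + 1)) := hSA.2 k (k + 1) k.lt_succ_self hk
  rw [hr, hr'] at hlt
  change min (lcpLen (m.drop (SA k)) (m.drop (SA (k + 1)))) (strAt m (SA (k + 1))).length =
    (strAt m (SA (k + 1))).length ↔ _
  rw [min_eq_right_iff, hr, hr']
  exact length_le_lcpLen_append_bot_iff (bot_not_mem_strAt _ _) (bot_not_mem_strAt _ _) hlt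

lemma strAt_eq_of_le_of_le (hm : [⊥] <:+ m) (hSA : IsSuffixArray m SA)
    {w : List (WithBot α)} {i j k : ℕ} (hij : i ≤ j) (hjk : j ≤ k) (hk : k < m.length)
    (hi : strAt m (SA i) = w) (hk' : strAt m (SA k) = w) : strAt m (SA j) = w := by
  have hw : ⊥ ∉ w := hi ▸ bot_not_mem_strAt _ _
  have hpre : ∀ l < m.length, w ++ [⊥] <+: m.drop (SA l) ↔ strAt m (SA l) = w :=
    fun l hl => append_bot_prefix_drop_iff hm (hSA.1.mapsTo hl) hw
  rcases hij.eq_or_lt with rfl | hij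
  · exact hi
  rcases hjk.eq_or_lt with rfl | hjk
  · exact hk'
  exact (hpre j (by omega)).1 <| prefix_of_lt_of_lt ((hpre i (by omega)).2 hi) ((hpre k hk).2 hk')
    (hSA.2 i j hij (by omega)) (hSA.2 j k hjk hk)

lemma strAt_eq_of_mem_Icc (hm : [⊥] <:+ m) (hSA : IsSuffixArray m SA) {u : ℕ × ℕ}
    (hu : u ∈ DecompBWT m SA) {k : ℕ} (hk : k ∈ Finset.Icc u.1 u.2) :
    strAt m (SA k) = strAt m (SA u.1) := by
  obtain ⟨h₁, h₂⟩ := Finset.mem_Icc.mp hk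
  clear hk
  induction k, h₁ using Nat.le_induction with
  | base => rfl
  | succ j hj ih =>
    rw [← ih (by omega), ← lcpP_succ_eq_lrs_iff hm hSA (by have := hu.2.1; omega)]
    exact hu.2.2.1 (j + 1) (by omega) h₂

lemma mem_Icc_of_strAt_eq (hm : [⊥] <:+ m) (hSA : IsSuffixArray m SA) {u : ℕ × ℕ}
    (hu : u ∈ DecompBWT m SA) {k : ℕ} (hk : k < m.length)
    (h : strAt m (SA k) = strAt m (SA u.1)) : k ∈ Finset.Icc u.1 u.2 := by
  obtain ⟨hle, hlt, -, hstart, hend⟩ := id hu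
  rw [Finset.mem_Icc]
  constructor
  · by_contra! hku
    obtain ⟨j, hj⟩ : ∃ j, u.1 = j + 1 := ⟨u.1 - 1, by omega⟩
    have hju : strAt m (SA (j + 1)) = strAt m (SA j) :=
      (hj ▸ strAt_eq_of_le_of_le hm hSA (by omega : k ≤ j) (by omega) (by omega) h rfl).symm
    rcases hstart with h0 | hne
    · omega
    · exact hne (hj ▸ (lcpP_succ_eq_lrs_iff hm hSA (by omega)).2 hju)
  · by_contra! hku
    have hu₂ : strAt m (SA u.2) = strAt m (SA u.1) :=
      strAt_eq_of_mem_Icc hm hSA hu (Finset.right_mem_Icc.mpr hle)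
    have hsucc := strAt_eq_of_le_of_le hm hSA (Nat.le_succ u.2) hku hk hu₂ h
    rcases hend with hN | hne
    · omega
    · exact hne ((lcpP_succ_eq_lrs_iff hm hSA (by omega)).2 (hsucc.trans hu₂.symm))

lemma card_decompBWT_eq_occurrenceCount (hm : [⊥] <:+ m) (hSA : IsSuffixArray m SA)
    {u : ℕ × ℕ} (hu : u ∈ DecompBWT m SA) :
    u.2 - u.1 + 1 = occurrenceCount (strAt m (SA u.1) ++ [⊥]) m := by
  set w := strAt m (SA u.1)
  obtain ⟨hle, hlt, -⟩ := id hu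
  calc u.2 - u.1 + 1 = (Finset.Icc u.1 u.2).card := by rw [Nat.card_Icc]; omega
    _ = ((Finset.range m.length).filter fun k => strAt m (SA k) = w).card := by
      congr 1
      ext k
      rw [Finset.mem_filter, Finset.mem_range]
      refine ⟨fun hk => ⟨?_, strAt_eq_of_mem_Icc hm hSA hu hk⟩,
        fun hk => mem_Icc_of_strAt_eq hm hSA hu hk.1 hk.2⟩
      have := Finset.mem_Icc.mp hk
      omega
    _ = ((Finset.range m.length).filter fun k => w ++ [⊥] <+: m.drop (SA k)).card := by
      refine congrArg _ (Finset.filter_congr fun k hk => ?_)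
      exact (append_bot_prefix_drop_iff hm (hSA.1.mapsTo (Finset.mem_range.mp hk))
        (bot_not_mem_strAt _ _)).symm
    _ = occurrenceCount (w ++ [⊥]) m :=
      card_filter_comp_of_bijOn (by simpa using hSA.1) (fun p => w ++ [⊥] <+: m.drop p)

end SuffixArray

lemma reverse_decPre [LinearOrder α] (m : List (WithBot α)) (SA : ℕ → ℕ) (u : ℕ × ℕ) :
    (decPre m SA u).reverse = strAt m (SA u.1) := by
  rw [decPre, List.reverse_reverse]
  exact (List.prefix_iff_eq_take.mp (List.takeWhile_prefix _)).symm

lemma singleton_bot_suffix_mP (P : OSS α) : [⊥] <:+ mP P := by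
  obtain ⟨ls, t, hP⟩ := (List.eq_nil_or_concat P.strs).resolve_left P.strs_ne
  simp only [mP, hP, List.concat_eq_append, List.map_append, List.flatten_append,
    List.map_singleton, List.flatten_singleton, ← List.append_assoc]
  exact List.suffix_append _ _

theorem card_interval_eq_count_suffix_general [LinearOrder α] (P : OSS α)
    (SA : ℕ → ℕ) (hSA : IsSuffixArray (mP P) SA)
    (u : ℕ × ℕ) (hu : u ∈ DecompBWT (mP P) SA) :
    u.2 - u.1 + 1 =
      (P.strs.filter
        (fun s => decide ((decPre (mP P) SA u).reverse <:+ s.map sym))).length := by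
  rw [card_decompBWT_eq_occurrenceCount (singleton_bot_suffix_mP P) hSA hu, reverse_decPre, mP,
    occurrenceCount_flatten (bot_not_mem_strAt _ _)]

/-- The cardinality of an interval `u ∈ Decomp_BWT(P)` equals the
number of strings `s ∈ P.S` having `reverse(Dec_Pre[u])` as a suffix. -/
theorem card_interval_eq_count_suffix [Fintype α] [LinearOrder α] (P : OSS α)
    (SA : ℕ → ℕ) (hSA : IsSuffixArray (mP P) SA)
    (u : ℕ × ℕ) (hu : u ∈ DecompBWT (mP P) SA) :
    u.2 - u.1 + 1 =
      (P.strs.filter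
        (fun s => decide ((decPre (mP P) SA u).reverse <:+ s.map sym))).length :=
  card_interval_eq_count_suffix_general P SA hSA u hu

end BwtXbw
end

section
/- Let P be an ordered set of strings and let u ∈ Decomp_BWT(P). Then the set of symbols {BWT(P)[k] : k ∈ u} equals the set of symbols c ∈ Σ ∪ {$} such that the string Dec_Pre[u] followed by the single symbol c is a prefix of some string of the set {reverse(s) followed by $ : s ∈ P.S}. -/
/-!
Write `W` for the `$`-free word starting the suffix of rank `u.1`, so that `Dec_Pre[u]` is the
reverse of `W`. Inside `u`, `LCP = LRS` says that each suffix agrees with its predecessor on its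
own `$`-free word; since the suffixes are sorted and `$` is the least symbol, the two words then
coincide, so every suffix ranked in `u` starts with `W $`. Conversely, a suffix starting with
`W $` ranked outside `u` would, by sortedness, force the suffix just across a boundary of `u` to
start with `W $` as well, contradicting the maximality of `u`. So the BWT symbols on `u` are the
`c` such that `c W $` occurs in `$ m_P = $ t_1 $ ⋯ $ t_n $`; as `W` is `$`-free, such an
occurrence ends at the separator closing some `$ t_r`, i.e. `c W` is a suffix of `$ t_r`.
-/

namespace List

variable {β γ : Type*}

theorem cons_infix_iff {c : β} {v l : List β} :
    c :: v <:+: l ↔ ∃ p, l[p]? = some c ∧ v <+: l.drop (p + 1) := by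
  constructor
  · rintro ⟨s, t, rfl⟩
    exact ⟨s.length, by simp, by simp⟩
  · rintro ⟨p, hc, hv⟩
    obtain ⟨hp, hc⟩ := getElem?_eq_some_iff.mp hc
    have hdrop : c :: v <+: l.drop p := by
      rw [drop_eq_getElem_cons hp, hc]
      exact cons_prefix_cons.mpr ⟨rfl, hv⟩
    exact hdrop.isInfix.trans (drop_suffix p l).isInfix

theorem mem_drop_of_getLast?_eq_some {l : List β} {z : β} {p : ℕ}
    (h : l.getLast? = some z) (hp : p < l.length) : z ∈ l.drop p :=
  mem_of_getLast? (by rw [getLast?_drop, if_neg (by omega), h])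

theorem prefix_of_le_of_le [LinearOrder γ] {q a b c : List γ} (hab : a ≤ b) (hbc : b ≤ c)
    (ha : q <+: a) (hc : q <+: c) : q <+: b := by
  induction q generalizing a b c with
  | nil => simp
  | cons x q ih =>
    obtain ⟨a, rfl⟩ := ha
    obtain ⟨c, rfl⟩ := hc
    rcases hab.lt_or_eq with hab | rfl
    · rcases hbc.lt_or_eq with hbc | rfl
      · cases hab with
        | rel h₁ =>
          cases hbc with
          | rel h₂ => exact absurd (h₁.trans h₂) (lt_irrefl x)
          | cons => exact absurd h₁ (lt_irrefl x)
        | cons h₁ =>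
          cases hbc with
          | rel h₂ => exact absurd h₂ (lt_irrefl x)
          | cons h₂ =>
            exact cons_prefix_cons.mpr
              ⟨rfl, ih (le_of_lt (α := List γ) h₁) (le_of_lt (α := List γ) h₂)
                (q.prefix_append a) (q.prefix_append c)⟩
      · exact prefix_append _ _
    · exact prefix_append _ _

section Separator

variable [DecidableEq β] {z : β}

theorem not_mem_takeWhile_ne (l : List β) : z ∉ l.takeWhile (fun c => decide (c ≠ z)) :=
  fun h => by simpa using mem_takeWhile_imp h

theorem takeWhile_ne_append_cons {x : List β} (r : List β) (hx : z ∉ x) :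
    (x ++ z :: r).takeWhile (fun c => decide (c ≠ z)) = x := by
  rw [takeWhile_append_of_pos (fun a ha => by simpa using ne_of_mem_of_not_mem ha hx)]
  simp

theorem takeWhile_ne_append_singleton_prefix {l : List β} (h : z ∈ l) :
    l.takeWhile (fun c => decide (c ≠ z)) ++ [z] <+: l := by
  induction l with
  | nil => simp at h
  | cons a l ih =>
    by_cases ha : a = z
    · simp [ha]
    · simpa [takeWhile_cons, ha] using ih ((mem_cons.mp h).resolve_left (Ne.symm ha))

theorem cons_append_singleton_infix_cons_append_iff {c : β} {w b Y : List β} (hw : z ∉ w)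
    (hb : z ∉ b) :
    c :: w ++ [z] <:+: (z :: b) ++ z :: Y ↔ c :: w <:+ z :: b ∨ c :: w ++ [z] <:+: z :: Y := by
  have hnot : ¬ c :: w ++ [z] <:+: z :: b := by
    intro h
    rcases infix_cons_iff.mp h with h | h
    · exact hb ((cons_prefix_cons.mp h).2.subset (by simp))
    · exact hb (h.subset (by simp))
  constructor
  · intro h
    rcases infix_append_iff.mp h with h | h | ⟨l₁, l₂, hl, hl₁, hl₂⟩
    · exact absurd h hnot
    · exact Or.inr h
    obtain _ | ⟨y, l₂⟩ := l₂
    · exact absurd (hl ▸ (append_nil l₁).symm ▸ hl₁.isInfix) hnot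
    obtain ⟨hy, -⟩ := cons_prefix_cons.mp hl₂
    rw [hy] at hl hl₂
    obtain _ | ⟨x, l₁⟩ := l₁
    · exact Or.inr (hl ▸ hl₂.isInfix)
    rw [cons_append, cons_append, cons.injEq] at hl
    obtain ⟨rfl, hwl⟩ := hl
    have hl₁b : z ∉ l₁ := by
      rcases suffix_cons_iff.mp hl₁ with h | h
      · exact (cons_eq_cons.mp h).2 ▸ hb
      · exact fun hz => hb (h.subset (mem_cons_of_mem _ hz))
    have hwl := congrArg (takeWhile (fun c => decide (c ≠ z))) hwl
    rw [takeWhile_ne_append_cons _ hw, takeWhile_ne_append_cons _ hl₁b] at hwl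
    exact Or.inl (hwl ▸ hl₁)
  · rintro (h | h)
    · exact infix_append_iff.mpr (Or.inr (Or.inr ⟨c :: w, [z], rfl, h, by simp⟩))
    · exact infix_append_of_infix_right h

theorem cons_append_singleton_infix_flatten_iff {α : Type*} {c : β} {w : List β}
    (f : α → List β) (hw : z ∉ w) {L : List α} (hf : ∀ s ∈ L, z ∉ f s) :
    c :: w ++ [z] <:+: z :: (L.map (fun s => f s ++ [z])).flatten ↔
      ∃ s ∈ L, c :: w <:+ z :: f s := by
  induction L with
  | nil =>
    simp only [map_nil, flatten_nil, not_mem_nil, false_and, exists_false, iff_false]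
    exact fun h => by simpa using h.length_le
  | cons s L ih =>
    have := cons_append_singleton_infix_cons_append_iff (c := c)
      (Y := (L.map (fun s => f s ++ [z])).flatten) hw (hf s mem_cons_self)
    have ih := ih fun s hs => hf s (mem_cons_of_mem _ hs)
    simp only [map_cons, flatten_cons, append_assoc, cons_append, nil_append] at this ih ⊢
    rw [this, ih, exists_mem_cons_iff]

end Separator

theorem takeWhile_ne_bot_eq_of_lt [LinearOrder γ] [OrderBot γ] {a b : List γ} (hab : a < b)
    (hb : b.takeWhile (fun c => decide (c ≠ ⊥)) <+: a) :
    a.takeWhile (fun c => decide (c ≠ ⊥)) = b.takeWhile (fun c => decide (c ≠ ⊥)) := by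
  obtain ⟨a, rfl⟩ := hb
  rw [takeWhile_append_of_pos (fun _ hx => mem_takeWhile_imp (p := fun c => decide (c ≠ ⊥)) hx)]
  suffices a.takeWhile (fun c => decide (c ≠ ⊥)) = [] by rw [this, append_nil]
  cases a with
  | nil => rfl
  | cons y a =>
    by_cases hy : y = ⊥
    · simp [hy]
    -- a symbol `y ≠ ⊥` where `b` has `⊥` (or ends) would make `a` larger than `b`
    exfalso
    by_cases hbot : ⊥ ∈ b
    · obtain ⟨r, hr⟩ := takeWhile_ne_append_singleton_prefix hbot
      have hba : b < b.takeWhile (fun c => decide (c ≠ ⊥)) ++ y :: a := by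
        conv_lhs => rw [← hr, append_assoc, singleton_append]
        exact append_left_lt (Lex.rel (bot_lt_iff_ne_bot.mpr hy))
      exact lt_asymm hab hba
    · rw [takeWhile_eq_self_iff.mpr (fun x hx => by simpa using ne_of_mem_of_not_mem hx hbot)]
        at hab
      exact (prefix_append b (y :: a)).le hab

end List

namespace BwtXbw

variable {α : Type*}

theorem prefix_iff_length_le_lcpLen {β : Type*} [DecidableEq β] {q a b : List β}
    (hb : q <+: b) : q <+: a ↔ q.length ≤ lcpLen a b := by
  induction q generalizing a b with
  | nil => simp
  | cons x q ih =>
    obtain ⟨b, rfl⟩ := hb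
    cases a with
    | nil => simp [lcpLen]
    | cons y a =>
      by_cases hxy : y = x
      · subst hxy
        simp [lcpLen, ih (q.prefix_append b)]
      · simp [lcpLen, hxy, Ne.symm hxy]

theorem getLast?_mP (P : OSS α) : (mP P).getLast? = some ⊥ := by
  obtain ⟨L, s, hL⟩ := (List.eq_nil_or_concat P.strs).resolve_left P.strs_ne
  simp [mP, hL]

theorem getElem?_bot_cons_eq_bwtArr {m : List (WithBot α)} {SA : ℕ → ℕ} {i : ℕ}
    (h : SA i ≤ m.length) : (⊥ :: m)[SA i]? = some (bwtArr m SA i) := by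
  unfold bwtArr
  split_ifs with h0
  · simp [h0]
  · obtain ⟨p, hp⟩ := Nat.exists_eq_succ_of_ne_zero h0
    simp [hp, List.getElem?_eq_getElem (show p < m.length by omega)]

section SuffixArray

variable [LinearOrder α] {m : List (WithBot α)} {SA : ℕ → ℕ}

def lrsStr (m : List (WithBot α)) (SA : ℕ → ℕ) (i : ℕ) : List (WithBot α) :=
  (m.drop (SA i)).takeWhile (fun c => decide (c ≠ ⊥))

theorem lrs_eq_length_lrsStr (i : ℕ) : lrs m SA i = (lrsStr m SA i).length := rfl

theorem decPre_eq_reverse_lrsStr (u : ℕ × ℕ) : decPre m SA u = (lrsStr m SA u.1).reverse := by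
  rw [decPre, lrs_eq_length_lrsStr, lrsStr,
    ← List.prefix_iff_eq_take.mp (List.takeWhile_prefix _)]

theorem bot_not_mem_lrsStr (i : ℕ) : ⊥ ∉ lrsStr m SA i := List.not_mem_takeWhile_ne _

theorem lrsStr_eq_of_prefix {W : List (WithBot α)} {i : ℕ} (hW : ⊥ ∉ W)
    (h : W ++ [⊥] <+: m.drop (SA i)) : lrsStr m SA i = W := by
  obtain ⟨r, hr⟩ := h
  rw [lrsStr, ← hr, List.append_assoc, List.singleton_append]
  exact List.takeWhile_ne_append_cons r hW

theorem lcpP_eq_lrs_iff {i : ℕ} (hi : i ≠ 0) :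
    lcpP m SA i = lrs m SA i ↔ lrsStr m SA i <+: m.drop (SA (i - 1)) := by
  rw [lcpP, if_neg hi, min_eq_right_iff, lrs_eq_length_lrsStr]
  exact (prefix_iff_length_le_lcpLen (List.takeWhile_prefix _)).symm

theorem IsSuffixArray.lt_length (hSA : IsSuffixArray m SA) {k : ℕ} (hk : k < m.length) :
    SA k < m.length :=
  hSA.1.mapsTo hk

theorem IsSuffixArray.prefix_of_le_of_le (hSA : IsSuffixArray m SA) {q : List (WithBot α)}
    {i j k : ℕ} (hij : i ≤ j) (hjk : j ≤ k) (hkN : k < m.length) (hi : q <+: m.drop (SA i))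
    (hk : q <+: m.drop (SA k)) : q <+: m.drop (SA j) := by
  have mono : ∀ {a b}, a ≤ b → b < m.length → m.drop (SA a) ≤ m.drop (SA b) :=
    fun hab hb => hab.lt_or_eq.elim
      (fun hab => le_of_lt (α := List (WithBot α)) (hSA.2 _ _ hab hb)) (fun hab => hab ▸ le_rfl)
  exact List.prefix_of_le_of_le (mono hij (by omega)) (mono hjk hkN) hi hk

theorem IsSuffixArray.lrsStr_pred_eq (hSA : IsSuffixArray m SA) {i : ℕ} (hi : i ≠ 0)
    (hiN : i < m.length) (h : lcpP m SA i = lrs m SA i) :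
    lrsStr m SA (i - 1) = lrsStr m SA i :=
  List.takeWhile_ne_bot_eq_of_lt (hSA.2 _ _ (by omega) hiN) ((lcpP_eq_lrs_iff hi).mp h)

theorem IsSuffixArray.lrsStr_eq_of_mem_decompBWT (hSA : IsSuffixArray m SA) {u : ℕ × ℕ}
    (hu : u ∈ DecompBWT m SA) {k : ℕ} (hk₁ : u.1 ≤ k) (hk₂ : k ≤ u.2) :
    lrsStr m SA k = lrsStr m SA u.1 := by
  induction k, hk₁ using Nat.le_induction with
  | base => rfl
  | succ k hk ih =>
    have hkN : k + 1 < m.length := by have := hu.2.1; omega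
    rw [← ih (by omega), ← hSA.lrsStr_pred_eq (by omega) hkN (hu.2.2.1 _ (by omega) hk₂)]
    rfl

theorem IsSuffixArray.mem_decompBWT_iff_prefix (hSA : IsSuffixArray m SA)
    (hm : m.getLast? = some ⊥) {u : ℕ × ℕ} (hu : u ∈ DecompBWT m SA) {k : ℕ}
    (hk : k < m.length) :
    u.1 ≤ k ∧ k ≤ u.2 ↔ lrsStr m SA u.1 ++ [⊥] <+: m.drop (SA k) := by
  obtain ⟨hu₁₂, hu₂, -, hleft, hright⟩ := id hu
  have hprefix : ∀ j, u.1 ≤ j → j ≤ u.2 → lrsStr m SA u.1 ++ [⊥] <+: m.drop (SA j) :=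
    fun j hj₁ hj₂ => hSA.lrsStr_eq_of_mem_decompBWT hu hj₁ hj₂ ▸
      List.takeWhile_ne_append_singleton_prefix
        (List.mem_drop_of_getLast?_eq_some hm (hSA.lt_length (by omega)))
  have hboundary : ∀ i, i ≠ 0 → lrsStr m SA u.1 ++ [⊥] <+: m.drop (SA (i - 1)) →
      lrsStr m SA u.1 ++ [⊥] <+: m.drop (SA i) → lcpP m SA i = lrs m SA i :=
    fun i hi h₁ h₂ => by
      rw [lcpP_eq_lrs_iff hi, lrsStr_eq_of_prefix (bot_not_mem_lrsStr _) h₂]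
      exact (List.prefix_append _ _).trans h₁
  refine ⟨fun ⟨hk₁, hk₂⟩ => hprefix k hk₁ hk₂, fun h => ⟨?_, ?_⟩⟩
  · by_contra! hlt
    refine hleft.elim (by omega) (fun hne => hne (hboundary u.1 (by omega) ?_ ?_))
    · exact hSA.prefix_of_le_of_le (by omega) (by omega) (by omega) h (hprefix _ le_rfl hu₁₂)
    · exact hprefix _ le_rfl hu₁₂
  · by_contra! hlt
    refine hright.elim (by omega) (fun hne => hne (hboundary (u.2 + 1) (by omega) ?_ ?_))
    · exact hprefix _ hu₁₂ le_rfl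
    · exact hSA.prefix_of_le_of_le (by omega) (by omega) hk (hprefix _ hu₁₂ le_rfl) h

theorem IsSuffixArray.exists_bwtArr_eq_iff_infix (hSA : IsSuffixArray m SA)
    (hm : m.getLast? = some ⊥) {u : ℕ × ℕ} (hu : u ∈ DecompBWT m SA) (c : WithBot α) :
    (∃ k, u.1 ≤ k ∧ k ≤ u.2 ∧ bwtArr m SA k = c) ↔
      c :: lrsStr m SA u.1 ++ [⊥] <:+: ⊥ :: m := by
  rw [List.cons_append, List.cons_infix_iff]
  constructor
  · rintro ⟨k, hk₁, hk₂, rfl⟩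
    have hkN : k < m.length := by have := hu.2.1; omega
    exact ⟨SA k, getElem?_bot_cons_eq_bwtArr (hSA.lt_length hkN).le,
      (hSA.mem_decompBWT_iff_prefix hm hu hkN).mp ⟨hk₁, hk₂⟩⟩
  · rintro ⟨p, hc, hp⟩
    have hpN : p < m.length := by
      by_contra! hp'
      simp [List.drop_eq_nil_of_le hp'] at hp
    obtain ⟨k, hkN, rfl⟩ := hSA.1.surjOn hpN
    obtain ⟨hk₁, hk₂⟩ := (hSA.mem_decompBWT_iff_prefix hm hu hkN).mpr hp
    exact ⟨k, hk₁, hk₂, Option.some_injective _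
      ((getElem?_bot_cons_eq_bwtArr (hSA.lt_length hkN).le).symm.trans hc)⟩

end SuffixArray

theorem bwt_symbols_on_interval_general [LinearOrder α] (P : OSS α)
    (SA : ℕ → ℕ) (hSA : IsSuffixArray (mP P) SA)
    (u : ℕ × ℕ) (hu : u ∈ DecompBWT (mP P) SA) :
    { c : WithBot α | ∃ k, u.1 ≤ k ∧ k ≤ u.2 ∧ bwtArr (mP P) SA k = c } =
    { c : WithBot α | ∃ s ∈ P.strs,
        (decPre (mP P) SA u ++ [c]) <+: (s.reverse.map sym ++ [⊥]) } := by
  ext c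
  rw [Set.mem_ofPred_eq, Set.mem_ofPred_eq, hSA.exists_bwtArr_eq_iff_infix (getLast?_mP P) hu,
    mP, List.cons_append_singleton_infix_flatten_iff (List.map sym) (bot_not_mem_lrsStr _)
      (fun s _ => by simp [sym])]
  refine exists_congr fun s => and_congr_right fun _ => ?_
  rw [decPre_eq_reverse_lrsStr, ← List.reverse_prefix]
  simp

/-- The set of symbols `{BWT(P)[k] : k ∈ u}` equals the set of symbols
`c` such that `Dec_Pre[u] ++ [c]` is a prefix of some `reverse(s) ++ [$]`, `s ∈ P.S`. -/
theorem bwt_symbols_on_interval [Fintype α] [LinearOrder α] (P : OSS α)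
    (SA : ℕ → ℕ) (hSA : IsSuffixArray (mP P) SA)
    (u : ℕ × ℕ) (hu : u ∈ DecompBWT (mP P) SA) :
    { c : WithBot α | ∃ k, u.1 ≤ k ∧ k ≤ u.2 ∧ bwtArr (mP P) SA k = c } =
    { c : WithBot α | ∃ s ∈ P.strs,
        (decPre (mP P) SA u ++ [c]) <+: (s.reverse.map sym ++ [⊥]) } :=
  bwt_symbols_on_interval_general P SA hSA u hu

end BwtXbw
end

section
/- Let T be an array of n symbols of a finite alphabet Σ and let D be an interval partition of [1,n] such that on every block the symbols of T are pairwise distinct. Suppose the singleton interval [i,i] is a block of D. Let D_1 = {[i',j'] ∈ D : j' ≤ i} (an interval partition of [1,i]) and D_2 = {[i',j'] ∈ D : i' ≥ i} (an interval partition of [i,n], reindexed to start at 1). If T'_1 is optimal for (T[1..i], D_1) and T'_2 is optimal for (T[i..n], D_2), then the concatenation T'_1[1..i−1] followed by T'_2 is optimal for (T, D). -/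
namespace BwtXbw

variable {α β : Type*}

/-! The singleton block forces the symbol `a` at the split position in every valid array, so
valid arrays for the whole decomposition are exactly `V₁ ++ a :: V₂` with `V₁ ++ [a]` and
`a :: V₂` valid for the two halves, and `d_A` is additive across the shared `a`. -/

theorem _root_.List.Forall₂.exists_of_append_left {γ δ : Type*} {R : γ → δ → Prop}
    {l₁ l₂ : List γ} {l : List δ} (h : List.Forall₂ R (l₁ ++ l₂) l) :
    ∃ u v, List.Forall₂ R l₁ u ∧ List.Forall₂ R l₂ v ∧ l = u ++ v := by
  induction l₁ generalizing l with
  | nil => exact ⟨[], l, .nil, h, rfl⟩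
  | cons x xs ih =>
    obtain _ | ⟨hx, htl⟩ := h
    obtain ⟨u, v, hu, hv, rfl⟩ := ih htl
    exact ⟨_ :: u, v, .cons hx hu, hv, rfl⟩

section ValidArr

variable [DecidableEq β]

theorem validArr_append {B C : List (List β)} {T : List β} :
    ValidArr (B ++ C) T ↔ ∃ T₁ T₂, ValidArr B T₁ ∧ ValidArr C T₂ ∧ T = T₁ ++ T₂ := by
  constructor
  · rintro ⟨B', hB', rfl⟩
    obtain ⟨u, v, hu, hv, rfl⟩ := hB'.exists_of_append_left
    exact ⟨u.flatten, v.flatten, ⟨u, hu, rfl⟩, ⟨v, hv, rfl⟩, List.flatten_append⟩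
  · rintro ⟨_, _, ⟨u, hu, rfl⟩, ⟨v, hv, rfl⟩, rfl⟩
    exact ⟨u ++ v, List.rel_append hu hv, List.flatten_append⟩

theorem validArr_singleton_singleton {a : β} {T : List β} :
    ValidArr [[a]] T ↔ T = [a] := by
  constructor
  · rintro ⟨_, _ | ⟨⟨hlen, hset⟩, _ | _⟩, rfl⟩
    obtain ⟨x, rfl⟩ := List.length_eq_one_iff.mp hlen.symm
    simp_all
  · rintro rfl
    exact ⟨[[a]], .cons ⟨rfl, rfl⟩ .nil, rfl⟩

theorem validArr_append_singleton {B : List (List β)} {a : β} {T : List β} :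
    ValidArr (B ++ [[a]]) T ↔ ∃ T₁, ValidArr B T₁ ∧ T = T₁ ++ [a] := by
  simp only [validArr_append, validArr_singleton_singleton, exists_eq_left, exists_and_left]

theorem validArr_singleton_cons {B : List (List β)} {a : β} {T : List β} :
    ValidArr ([a] :: B) T ↔ ∃ T₂, ValidArr B T₂ ∧ T = a :: T₂ := by
  rw [← List.singleton_append, validArr_append]
  simp only [validArr_singleton_singleton, exists_and_left, exists_eq_left,
    List.singleton_append]

theorem validArr_append_singleton_cons {B₁ B₂ : List (List β)} {a : β} {T : List β} :
    ValidArr (B₁ ++ [a] :: B₂) T ↔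
      ∃ T₁ T₂, ValidArr B₁ T₁ ∧ ValidArr B₂ T₂ ∧ T = T₁ ++ a :: T₂ := by
  simp only [validArr_append, validArr_singleton_cons]
  constructor
  · rintro ⟨T₁, _, h₁, ⟨T₂, h₂, rfl⟩, rfl⟩
    exact ⟨T₁, T₂, h₁, h₂, rfl⟩
  · rintro ⟨T₁, T₂, h₁, h₂, rfl⟩
    exact ⟨T₁, _, h₁, ⟨T₂, h₂, rfl⟩, rfl⟩

end ValidArr

theorem dA_append_cons [DecidableEq β] (xs ys : List β) (y : β) :
    dA (xs ++ y :: ys) = dA (xs ++ [y]) + dA (y :: ys) := by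
  induction xs with
  | nil => simp [dA]
  | cons x xs ih =>
    cases xs with
    | nil => simp [dA]
    | cons x' xs => simp only [List.cons_append, dA] at *; omega

theorem optimal_split_singleton_general [DecidableEq β]
    (B₁ B₂ : List (List β)) (a : β)
    (T₁' T₂' : List β)
    (h₁ : OptimalArr (B₁ ++ [[a]]) T₁') (h₂ : OptimalArr ([a] :: B₂) T₂') :
    OptimalArr (B₁ ++ [a] :: B₂) (T₁'.dropLast ++ T₂') := by
  obtain ⟨⟨U₁, hU₁, rfl⟩, hmin₁⟩ := And.imp_left validArr_append_singleton.mp h₁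
  obtain ⟨⟨U₂, hU₂, rfl⟩, hmin₂⟩ := And.imp_left validArr_singleton_cons.mp h₂
  rw [List.dropLast_concat]
  refine ⟨validArr_append_singleton_cons.mpr ⟨U₁, U₂, hU₁, hU₂, rfl⟩, ?_⟩
  rintro _ hT
  obtain ⟨V₁, V₂, hV₁, hV₂, rfl⟩ := validArr_append_singleton_cons.mp hT
  have hle₁ := hmin₁ (V₁ ++ [a]) (validArr_append_singleton.mpr ⟨V₁, hV₁, rfl⟩)
  have hle₂ := hmin₂ (a :: V₂) (validArr_singleton_cons.mpr ⟨V₂, hV₂, rfl⟩)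
  rw [dA_append_cons U₁, dA_append_cons V₁]
  omega

/-- Splitting at a singleton block `[a]`: if `T₁'` is optimal for the
blocks up to (and including) the singleton block and `T₂'` is optimal for the blocks
from the singleton block on, then `T₁'` with its last symbol removed, followed by
`T₂'`, is optimal for the whole decomposition. -/
theorem optimal_split_singleton [Fintype β] [DecidableEq β]
    (B₁ B₂ : List (List β)) (a : β)
    (hne : ∀ b ∈ B₁ ++ [a] :: B₂, b ≠ []) (hnd : ∀ b ∈ B₁ ++ [a] :: B₂, b.Nodup)
    (T₁' T₂' : List β)
    (h₁ : OptimalArr (B₁ ++ [[a]]) T₁') (h₂ : OptimalArr ([a] :: B₂) T₂') :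
    OptimalArr (B₁ ++ [a] :: B₂) (T₁'.dropLast ++ T₂') :=
  optimal_split_singleton_general B₁ B₂ a T₁' T₂' h₁ h₂

end BwtXbw
end
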